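/- arXiv:2412.17987 — 6 statements merged into one kernel-verified Lean document; each statement's English description precedes it below -/
import Mathlib

section
/- Let C be a linear code in F_q^n and A ⊆ {1,...,n}. Then dim P_A(C) + dim (C^⊥)_A = #A, where C^⊥ is the dual code and (C^⊥)_A = {c ∈ C^⊥ : c_i = 0 for all i ∉ A}. -/
open Classical

noncomputable def projMap (F : Type*) [Field F] {n : ℕ} (A : Finset (Fin n)) :
    (Fin n → F) →ₗ[F] (Fin n → F) where
  toFun x := fun i => if i ∈ A then x i else 0
  map_add' x y := by
    funext i; by_cases h : i ∈ A <;> simp [h]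
  map_smul' c x := by
    funext i; by_cases h : i ∈ A <;> simp [h]

def zeroOutside (F : Type*) [Field F] {n : ℕ} (A : Finset (Fin n)) :
    Submodule F (Fin n → F) where
  carrier := {x | ∀ i, i ∉ A → x i = 0}
  add_mem' := by
    intro x y hx hy i hi
    simp only [Pi.add_apply]
    simp [hx i hi, hy i hi]
  zero_mem' := fun i _ => rfl
  smul_mem' := by
    intro c x hx i hi
    simp [hx i hi]

def dualCode {F : Type*} [Field F] {n : ℕ} (C : Submodule F (Fin n → F)) :
    Submodule F (Fin n → F) where
  carrier := {x | ∀ c ∈ C, ∑ i, x i * c i = 0}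
  add_mem' := by
    intro x y hx hy c hc
    simp [add_mul, Finset.sum_add_distrib, hx c hc, hy c hc]
  zero_mem' := by intro c hc; simp
  smul_mem' := by
    intro a x hx c hc
    simp [smul_eq_mul, mul_assoc, ← Finset.mul_sum, hx c hc]

def suppSet {F : Type*} [Field F] {n : ℕ} (D : Submodule F (Fin n → F)) : Set (Fin n) :=
  {i | ∃ x ∈ D, x i ≠ 0}

noncomputable def rghw {F : Type*} [Field F] {n : ℕ}
    (C1 C2 : Submodule F (Fin n → F)) (t : ℕ) : ℕ :=
  sInf {w | ∃ D : Submodule F (Fin n → F), D ≤ C1 ∧ D ⊓ C2 = ⊥ ∧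
    Module.finrank F ↥D = t ∧ (suppSet D).ncard = w}

noncomputable def minDist {F : Type*} [Field F] {n : ℕ} (C : Submodule F (Fin n → F)) : ℕ :=
  sInf {w | ∃ c ∈ C, c ≠ (0 : Fin n → F) ∧ ({i | c i ≠ 0} : Set (Fin n)).ncard = w}

/-! For `x` supported on `A` one has `x ⬝ᵥ c = x ⬝ᵥ P_A c`, so `(C^⊥)_A` is exactly the
orthogonal complement of `P_A(C)` inside the space `U` of vectors supported on `A`. The dot product
is nondegenerate on `U`, and `dim U = #A`, so the claim is the usual `dim W + dim W^⊥ = dim U`. -/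

open Module

theorem Submodule.finrank_comap_subtype {K V : Type*} [Field K] [AddCommGroup V] [Module K V]
    (U X : Submodule K V) : finrank K (X.comap U.subtype) = finrank K ↥(X ⊓ U) := by
  rw [← finrank_map_subtype_eq, map_comap_subtype, inf_comm]

namespace LinearMap.BilinForm

variable {K V : Type*} [Field K] [AddCommGroup V] [Module K V]

theorem orthogonal_comap_subtype {B : LinearMap.BilinForm K V} {U W : Submodule K V}
    (hWU : W ≤ U) :
    (B.restrict U).orthogonal (W.comap U.subtype) = (B.orthogonal W).comap U.subtype := by
  ext x
  simp only [mem_orthogonal_iff, Submodule.mem_comap, Submodule.coe_subtype, restrict_apply,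
    Subtype.forall]
  exact ⟨fun h w hw => h w (hWU hw) hw, fun h w _ hw => h w hw⟩

theorem finrank_add_finrank_orthogonal_inf [FiniteDimensional K V] {B : LinearMap.BilinForm K V}
    {U W : Submodule K V} (hU : (B.restrict U).Nondegenerate) (hWU : W ≤ U) :
    finrank K W + finrank K ↥(B.orthogonal W ⊓ U) = finrank K U := by
  have hW : finrank K (W.comap U.subtype) = finrank K W :=
    (Submodule.comapSubtypeEquivOfLe hWU).finrank_eq
  have h := finrank_orthogonal hU (W.comap U.subtype)
  rw [orthogonal_comap_subtype hWU, Submodule.finrank_comap_subtype, hW] at h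
  have := Submodule.finrank_le (W.comap U.subtype)
  omega

end LinearMap.BilinForm

section

variable {F : Type*} [Field F] {n : ℕ}

theorem projMap_mem_zeroOutside (A : Finset (Fin n)) (x : Fin n → F) :
    projMap F A x ∈ zeroOutside F A := fun _ hi => if_neg hi

theorem map_projMap_le_zeroOutside (C : Submodule F (Fin n → F)) (A : Finset (Fin n)) :
    C.map (projMap F A) ≤ zeroOutside F A := by
  rintro _ ⟨x, -, rfl⟩
  exact projMap_mem_zeroOutside A x

theorem projMap_dotProduct_of_mem_zeroOutside {A : Finset (Fin n)} {x : Fin n → F}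
    (hx : x ∈ zeroOutside F A) (y : Fin n → F) : projMap F A y ⬝ᵥ x = y ⬝ᵥ x := by
  refine Finset.sum_congr rfl fun i _ => ?_
  by_cases hi : i ∈ A
  · simp [projMap, hi]
  · simp [hx i hi]

theorem orthogonal_map_projMap_inf_zeroOutside (C : Submodule F (Fin n → F))
    (A : Finset (Fin n)) :
    LinearMap.BilinForm.orthogonal (dotProductBilin F F) (C.map (projMap F A)) ⊓ zeroOutside F A =
      dualCode C ⊓ zeroOutside F A := by
  ext x
  simp only [Submodule.mem_inf, LinearMap.BilinForm.mem_orthogonal_iff, Submodule.mem_map,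
    forall_exists_index, and_imp, forall_apply_eq_imp_iff₂, dotProductBilin_apply_apply]
  refine and_congr_left fun hx => ?_
  simp only [projMap_dotProduct_of_mem_zeroOutside hx, dotProduct_comm _ x]
  rfl

theorem eq_zero_of_forall_dotProduct_eq_zero {A : Finset (Fin n)} {x : Fin n → F}
    (hx : x ∈ zeroOutside F A) (h : ∀ y ∈ zeroOutside F A, x ⬝ᵥ y = 0) : x = 0 := by
  ext i
  by_cases hi : i ∈ A
  · have hsingle : (Pi.single i 1 : Fin n → F) ∈ zeroOutside F A := fun _ hj =>
      Pi.single_eq_of_ne (ne_of_mem_of_not_mem hi hj).symm 1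
    simpa using h _ hsingle
  · exact hx i hi

theorem nondegenerate_restrict_zeroOutside (A : Finset (Fin n)) :
    (LinearMap.BilinForm.restrict (dotProductBilin F F) (zeroOutside F A)).Nondegenerate :=
  ⟨fun x hx => Subtype.ext <| eq_zero_of_forall_dotProduct_eq_zero x.2 fun y hy => hx ⟨y, hy⟩,
    fun y hy => Subtype.ext <| eq_zero_of_forall_dotProduct_eq_zero y.2 fun x hx => by
      rw [dotProduct_comm]
      exact hy ⟨x, hx⟩⟩

variable (F)

def zeroOutsideEquiv (A : Finset (Fin n)) : zeroOutside F A ≃ₗ[F] (A → F) where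
  toFun x i := (x : Fin n → F) i
  invFun y := ⟨fun i => if h : i ∈ A then y ⟨i, h⟩ else 0, fun _ hi => dif_neg hi⟩
  map_add' _ _ := rfl
  map_smul' _ _ := rfl
  left_inv x := by
    ext i
    by_cases hi : i ∈ A
    · simp [hi]
    · simp [hi, x.2 i hi]
  right_inv y := by
    ext i
    simp [i.2]

theorem finrank_zeroOutside (A : Finset (Fin n)) : finrank F (zeroOutside F A) = A.card := by
  simp [(zeroOutsideEquiv F A).finrank_eq]

end

/-- Forney's second duality lemma: dim P_A(C) + dim (C^⊥)_A = #A. -/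
theorem forney_second_duality {F : Type*} [Field F] {n : ℕ}
    (C : Submodule F (Fin n → F)) (A : Finset (Fin n)) :
    Module.finrank F ↥(Submodule.map (projMap F A) C) +
      Module.finrank F ↥(dualCode C ⊓ zeroOutside F A) = A.card := by
  rw [← finrank_zeroOutside F A, ← orthogonal_map_projMap_inf_zeroOutside]
  exact LinearMap.BilinForm.finrank_add_finrank_orthogonal_inf
    (nondegenerate_restrict_zeroOutside A) (map_projMap_le_zeroOutside C A)
end

section
/- Let C_2 ⊆ C_1 ⊆ F_q^n be nested linear codes and A ⊆ {1,...,n}. Then dim (C_1)_Ā − dim (C_2)_Ā = max{ dim D : D is a subspace of C_1, D ∩ C_2 = {0}, Supp(D) ⊆ Ā }, where Supp(D) is the set of coordinate indices at which some vector of D is nonzero. -/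
open Classical

set_option maxHeartbeats 1000000 in
set_option synthInstance.maxHeartbeats 1000000 in
theorem dim_diff_eq_max_subspace {F : Type*} [Field F] {n : ℕ}
    (C1 C2 : Submodule F (Fin n → F)) (h : C2 ≤ C1) (A : Finset (Fin n)) :
    Module.finrank F ↥(C1 ⊓ zeroOutside F Aᶜ) -
      Module.finrank F ↥(C2 ⊓ zeroOutside F Aᶜ) =
    sSup {d : ℕ | ∃ D : Submodule F (Fin n → F), D ≤ C1 ∧ D ⊓ C2 = ⊥ ∧
      suppSet D ⊆ (↑(Aᶜ) : Set (Fin n)) ∧ Module.finrank F ↥D = d} := by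
  classical
  set Z := zeroOutside F Aᶜ with hZdef
  have hmemZ : ∀ x : Fin n → F, x ∈ Z ↔ ∀ i, i ∉ Aᶜ → x i = 0 := fun x => Iff.rfl
  have hsupp : ∀ D : Submodule F (Fin n → F),
      suppSet D ⊆ (↑(Aᶜ) : Set (Fin n)) ↔ D ≤ Z := by
    intro D
    constructor
    · intro hs x hx i hi
      by_contra h0
      exact hi (hs ⟨x, hx, h0⟩)
    · rintro hle i ⟨x, hx, h0⟩
      by_contra hi
      exact h0 ((hmemZ x).1 (hle hx) i hi)
  set S : Set ℕ := {d : ℕ | ∃ D : Submodule F (Fin n → F), D ≤ C1 ∧ D ⊓ C2 = ⊥ ∧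
      suppSet D ⊆ (↑(Aᶜ) : Set (Fin n)) ∧ Module.finrank F ↥D = d} with hS
  have hle : C2 ⊓ Z ≤ C1 ⊓ Z := inf_le_inf_right Z h
  have key : ∀ D : Submodule F (Fin n → F), D ≤ C1 → D ⊓ C2 = ⊥ → D ≤ Z →
      Module.finrank F ↥D + Module.finrank F ↥(C2 ⊓ Z) ≤ Module.finrank F ↥(C1 ⊓ Z) := by
    intro D h1 h2 h3
    have hD : D ≤ C1 ⊓ Z := le_inf h1 h3
    have hdisj : D ⊓ (C2 ⊓ Z) = ⊥ := by
      rw [eq_bot_iff]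
      intro x hx
      have hx2 : x ∈ D ⊓ C2 := ⟨hx.1, hx.2.1⟩
      rw [h2] at hx2
      exact hx2
    have heq := Submodule.finrank_sup_add_finrank_inf_eq D (C2 ⊓ Z)
    rw [hdisj, finrank_bot, add_zero] at heq
    rw [← heq]
    exact Submodule.finrank_mono (sup_le hD hle)
  set p : Submodule F ↥(C1 ⊓ Z) := (C2 ⊓ Z).comap (C1 ⊓ Z).subtype with hp
  obtain ⟨q, hq⟩ := Submodule.exists_isCompl p
  set W : Submodule F (Fin n → F) := q.map (C1 ⊓ Z).subtype with hW
  have hWle : W ≤ C1 ⊓ Z := Submodule.map_subtype_le _ _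
  have hWrank : Module.finrank F ↥W = Module.finrank F ↥q :=
    (Submodule.equivMapOfInjective _ (Submodule.injective_subtype _) q).symm.finrank_eq
  have hprank : Module.finrank F ↥p = Module.finrank F ↥(C2 ⊓ Z) :=
    (Submodule.comapSubtypeEquivOfLe hle).finrank_eq
  have hsum : Module.finrank F ↥p + Module.finrank F ↥q = Module.finrank F ↥(C1 ⊓ Z) :=
    Submodule.finrank_add_eq_of_isCompl hq
  have hWval : Module.finrank F ↥W =
      Module.finrank F ↥(C1 ⊓ Z) - Module.finrank F ↥(C2 ⊓ Z) := by
    omega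
  have hWdisj : W ⊓ C2 = ⊥ := by
    rw [eq_bot_iff]
    rintro x ⟨hxW, hxC2⟩
    obtain ⟨y, hy, rfl⟩ := hxW
    have hyp : y ∈ p := by
      simp only [hp, Submodule.mem_comap]
      exact ⟨hxC2, y.2.2⟩
    have : y ∈ p ⊓ q := ⟨hyp, hy⟩
    rw [hq.inf_eq_bot, Submodule.mem_bot] at this
    simp [this]
  have hWmem : Module.finrank F ↥(C1 ⊓ Z) - Module.finrank F ↥(C2 ⊓ Z) ∈ S := by
    exact ⟨W, hWle.trans inf_le_left, hWdisj, (hsupp W).2 (hWle.trans inf_le_right), hWval⟩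
  have hbdd : ∀ d ∈ S, d ≤ Module.finrank F ↥(C1 ⊓ Z) - Module.finrank F ↥(C2 ⊓ Z) := by
    rintro d ⟨D, h1, h2, h3, rfl⟩
    have := key D h1 h2 ((hsupp D).1 h3)
    omega
  refine le_antisymm (le_csSup ⟨_, hbdd⟩ hWmem) (csSup_le ⟨_, hWmem⟩ hbdd)
end

section
/- Let C_2 ⊊ C_1 ⊆ F_q^n be nested linear codes of codimension ℓ = dim C_1 − dim C_2, and for 1 ≤ t ≤ ℓ define the t-th relative generalized Hamming weight M_t(C_1,C_2) = min{ #Supp(D) : D ⊆ C_1 a subspace, D ∩ C_2 = {0}, dim D = t }. Then M_1(C_1,C_2) < M_2(C_1,C_2) < ... < M_ℓ(C_1,C_2), i.e., the relative generalized Hamming weights form a strictly increasing sequence. -/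
open Classical

set_option synthInstance.maxHeartbeats 400000
set_option maxHeartbeats 800000

open Module in
lemma rghw_exists_aux {F : Type*} [Field F] {n : ℕ}
    (C1 C2 : Submodule F (Fin n → F)) (h : C2 ≤ C1) (m : ℕ)
    (hm : m ≤ finrank F ↥C1 - finrank F ↥C2) :
    ∃ D : Submodule F (Fin n → F), D ≤ C1 ∧ D ⊓ C2 = ⊥ ∧ finrank F ↥D = m := by
  set C2' : Submodule F ↥C1 := Submodule.comap C1.subtype C2 with hC2'
  obtain ⟨W, hW⟩ := C2'.exists_isCompl
  have hfr2 : finrank F ↥C2' = finrank F ↥C2 :=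
    (Submodule.comapSubtypeEquivOfLe h).finrank_eq
  have hsum : finrank F ↥C2' + finrank F ↥W = finrank F ↥C1 :=
    Submodule.finrank_add_eq_of_isCompl hW
  have hWr : finrank F ↥W = finrank F ↥C1 - finrank F ↥C2 := by omega
  set D0 : Submodule F (Fin n → F) := W.map C1.subtype with hD0
  have hD0le : D0 ≤ C1 := Submodule.map_subtype_le _ _
  have hD0r : finrank F ↥D0 = finrank F ↥C1 - finrank F ↥C2 := by
    rw [hD0, Submodule.finrank_map_subtype_eq]; exact hWr
  have hD0C2 : D0 ⊓ C2 = ⊥ := by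
    rw [eq_bot_iff]
    rintro x ⟨hx1, hx2⟩
    obtain ⟨w, hw, rfl⟩ := hx1
    have hmem : w ∈ C2' ⊓ W := ⟨by simpa [hC2'] using hx2, hw⟩
    rw [hW.inf_eq_bot] at hmem
    simpa using congrArg C1.subtype hmem
  have hm' : m ≤ finrank F ↥D0 := hD0r ▸ hm
  obtain ⟨v⟩ : Nonempty (Basis (Fin (finrank F ↥D0)) F ↥D0) := ⟨finBasis F ↥D0⟩
  set f : Fin m → (Fin n → F) := fun i => (v (Fin.castLE hm' i) : Fin n → F) with hf
  have hli : LinearIndependent F f := by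
    have h1 : LinearIndependent F (fun i : Fin (finrank F ↥D0) => (v i : Fin n → F)) :=
      v.linearIndependent.map' D0.subtype (Submodule.ker_subtype _)
    exact h1.comp (Fin.castLE hm') (Fin.castLE_injective hm')
  refine ⟨Submodule.span F (Set.range f), ?_, ?_, ?_⟩
  · apply Submodule.span_le.2
    rintro x ⟨i, rfl⟩
    exact hD0le (v (Fin.castLE hm' i)).2
  · have hle : Submodule.span F (Set.range f) ≤ D0 := by
      apply Submodule.span_le.2
      rintro x ⟨i, rfl⟩
      exact (v (Fin.castLE hm' i)).2
    rw [eq_bot_iff, ← hD0C2]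
    exact inf_le_inf_right _ hle
  · rw [finrank_span_eq_card hli, Fintype.card_fin]

open Module in
lemma rghw_shrink_aux {F : Type*} [Field F] {n : ℕ} (D : Submodule F (Fin n → F)) (k : ℕ)
    (hD : finrank F ↥D = k + 1) :
    ∃ D' : Submodule F (Fin n → F), D' ≤ D ∧ finrank F ↥D' = k ∧
      (suppSet D').ncard < (suppSet D).ncard := by
  have hDne : D ≠ ⊥ := by
    intro hbot
    rw [hbot] at hD
    simp [finrank_bot] at hD
  obtain ⟨x, hxD, hx0⟩ := Submodule.exists_mem_ne_zero_of_ne_bot hDne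
  obtain ⟨i, hxi⟩ : ∃ i, x i ≠ 0 := by
    by_contra hc
    push_neg at hc
    exact hx0 (funext hc)
  have hiS : i ∈ suppSet D := ⟨x, hxD, hxi⟩
  set g : (Fin n → F) →ₗ[F] F := LinearMap.proj i with hg
  set f : ↥D →ₗ[F] F := g.comp D.subtype with hf
  have hfsurj : Function.Surjective f := by
    intro c
    refine ⟨(c * (x i)⁻¹) • ⟨x, hxD⟩, ?_⟩
    simp [hf, hg, LinearMap.proj, mul_assoc, inv_mul_cancel₀ hxi]
  have hrange : finrank F ↥(LinearMap.range f) = 1 := by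
    rw [LinearMap.range_eq_top.2 hfsurj, finrank_top, finrank_self]
  have hker : finrank F ↥(LinearMap.ker f) = k := by
    have := LinearMap.finrank_range_add_finrank_ker f
    rw [hrange, hD] at this
    omega
  refine ⟨(LinearMap.ker f).map D.subtype, Submodule.map_subtype_le _ _, ?_, ?_⟩
  · rw [Submodule.finrank_map_subtype_eq]; exact hker
  · have hsub : suppSet ((LinearMap.ker f).map D.subtype) ⊆ suppSet D \ {i} := by
      rintro j ⟨y, hy, hyj⟩
      obtain ⟨z, hz, rfl⟩ := hy
      refine ⟨⟨(z : Fin n → F), z.2, hyj⟩, ?_⟩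
      intro hji
      rw [Set.mem_singleton_iff] at hji
      subst hji
      have : f z = 0 := hz
      simp [hf, hg, LinearMap.proj] at this
      exact hyj this
    have hfin : (suppSet D).Finite := Set.toFinite _
    apply Set.ncard_lt_ncard _ hfin
    refine ⟨hsub.trans Set.diff_subset, fun hsup => ?_⟩
    have := hsup hiS
    exact (hsub this).2 rfl

open Module in
lemma rghw_step {F : Type*} [Field F] {n : ℕ}
    (C1 C2 : Submodule F (Fin n → F)) (h : C2 ≤ C1) (k : ℕ)
    (hk : k + 1 ≤ finrank F ↥C1 - finrank F ↥C2) :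
    rghw C1 C2 k < rghw C1 C2 (k + 1) := by
  have hne : {w | ∃ D : Submodule F (Fin n → F), D ≤ C1 ∧ D ⊓ C2 = ⊥ ∧
      finrank F ↥D = k + 1 ∧ (suppSet D).ncard = w}.Nonempty := by
    obtain ⟨D, hD1, hD2, hD3⟩ := rghw_exists_aux C1 C2 h (k + 1) hk
    exact ⟨(suppSet D).ncard, D, hD1, hD2, hD3, rfl⟩
  obtain ⟨D, hD1, hD2, hD3, hD4⟩ := Nat.sInf_mem hne
  obtain ⟨D', hle, hr', hcard⟩ := rghw_shrink_aux D k hD3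
  have h1 : rghw C1 C2 k ≤ (suppSet D').ncard := by
    apply Nat.sInf_le
    refine ⟨D', hle.trans hD1, ?_, hr', rfl⟩
    rw [eq_bot_iff, ← hD2]
    exact inf_le_inf_right _ hle
  calc rghw C1 C2 k ≤ (suppSet D').ncard := h1
    _ < (suppSet D).ncard := hcard
    _ = rghw C1 C2 (k + 1) := hD4

theorem rghw_strictMono {F : Type*} [Field F] {n : ℕ}
    (C1 C2 : Submodule F (Fin n → F)) (h : C2 < C1)
    (ℓ : ℕ) (hℓ : ℓ = Module.finrank F ↥C1 - Module.finrank F ↥C2)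
    (s t : ℕ) (hs : 1 ≤ s) (hst : s < t) (ht : t ≤ ℓ) :
    rghw C1 C2 s < rghw C1 C2 t := by
  subst hℓ
  induction t with
  | zero => omega
  | succ t ih =>
    rcases Nat.lt_or_ge s t with hlt | hge
    · exact (ih hlt (by omega)).trans (rghw_step C1 C2 h.le t ht)
    · have : s = t := by omega
      subst this
      exact rghw_step C1 C2 h.le s ht
end

section
/- Let C_2 ⊆ C_1 ⊆ F_q^n be nested linear codes with ℓ = dim C_1 − dim C_2 ≥ 1, let 1 ≤ j ≤ ℓ, and let A ⊆ {1,...,n} with #A > n − M_j(C_1,C_2). Then every subspace D ⊆ C_1 with D ∩ C_2 = {0} and Supp(D) ⊆ Ā satisfies dim D ≤ j − 1. Moreover there exists a set A of size exactly n − M_j(C_1,C_2) and a subspace D ⊆ C_1 with D ∩ C_2 = {0}, Supp(D) ⊆ Ā, and dim D = j. -/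
open Classical

set_option synthInstance.maxHeartbeats 1000000
set_option maxHeartbeats 1000000

lemma aux1 {F V : Type*} [Field F] [AddCommGroup V] [Module F V] [FiniteDimensional F V]
    {j : ℕ} (hj : j ≤ Module.finrank F V) : ∃ W : Submodule F V, Module.finrank F ↥W = j := by
  obtain ⟨f, hf⟩ := exists_linearIndependent_of_le_finrank (R := F) (M := V) hj
  exact ⟨Submodule.span F (Set.range f), by
    rw [finrank_span_eq_card hf, Fintype.card_fin]⟩

lemma aux2 {F : Type*} [Field F] {n : ℕ} (C1 C2 : Submodule F (Fin n → F)) (h : C2 ≤ C1)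
    {j : ℕ} (hj : j ≤ Module.finrank F ↥C1 - Module.finrank F ↥C2) :
    ∃ D : Submodule F (Fin n → F), D ≤ C1 ∧ D ⊓ C2 = ⊥ ∧ Module.finrank F ↥D = j := by
  set C2' : Submodule F ↥C1 := C2.comap C1.subtype with hC2'
  obtain ⟨W, hW⟩ := Submodule.exists_isCompl C2'
  have hfin : Module.finrank F ↥C2' = Module.finrank F ↥C2 :=
    (Submodule.comapSubtypeEquivOfLe h).finrank_eq
  have hsum := Submodule.finrank_add_eq_of_isCompl hW
  have hWrank : j ≤ Module.finrank F ↥W := by omega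
  obtain ⟨W', hW'⟩ := aux1 (F := F) (V := ↥W) hWrank
  refine ⟨(W'.map W.subtype).map C1.subtype, Submodule.map_subtype_le _ _, ?_, ?_⟩
  · rw [eq_bot_iff]
    rintro x ⟨hx1, hx2⟩
    obtain ⟨w, hw, rfl⟩ := hx1
    obtain ⟨w', hw', rfl⟩ := hw
    have hmem : (w' : ↥C1) ∈ C2' ⊓ W := ⟨by simpa [hC2'] using hx2,
      W.subtype_apply w' ▸ w'.2⟩
    rw [hW.inf_eq_bot] at hmem
    simpa using hmem
  · rw [Submodule.finrank_map_subtype_eq, Submodule.finrank_map_subtype_eq, hW']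

lemma supp_mono {F : Type*} [Field F] {n : ℕ} {D D' : Submodule F (Fin n → F)}
    (h : D' ≤ D) : suppSet D' ⊆ suppSet D := by
  rintro i ⟨x, hx, hxi⟩; exact ⟨x, h hx, hxi⟩

theorem reconstruction_numbers {F : Type*} [Field F] {n : ℕ}
    (C1 C2 : Submodule F (Fin n → F)) (h : C2 ≤ C1)
    (ℓ : ℕ) (hℓ : ℓ = Module.finrank F ↥C1 - Module.finrank F ↥C2) (hℓ1 : 1 ≤ ℓ)
    (j : ℕ) (hj1 : 1 ≤ j) (hj2 : j ≤ ℓ) :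
    (∀ A : Finset (Fin n), n - rghw C1 C2 j < A.card →
      ∀ D : Submodule F (Fin n → F), D ≤ C1 → D ⊓ C2 = ⊥ →
        suppSet D ⊆ (↑(Aᶜ) : Set (Fin n)) → Module.finrank F ↥D ≤ j - 1) ∧
    (∃ A : Finset (Fin n), A.card = n - rghw C1 C2 j ∧
      ∃ D : Submodule F (Fin n → F), D ≤ C1 ∧ D ⊓ C2 = ⊥ ∧
        suppSet D ⊆ (↑(Aᶜ) : Set (Fin n)) ∧ Module.finrank F ↥D = j) := by
  have hne : {w | ∃ D : Submodule F (Fin n → F), D ≤ C1 ∧ D ⊓ C2 = ⊥ ∧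
      Module.finrank F ↥D = j ∧ (suppSet D).ncard = w}.Nonempty := by
    obtain ⟨D, hD1, hD2, hD3⟩ := aux2 C1 C2 h (hℓ ▸ hj2)
    exact ⟨(suppSet D).ncard, D, hD1, hD2, hD3, rfl⟩
  obtain ⟨D₀, hD₀1, hD₀2, hD₀3, hD₀4⟩ := Nat.sInf_mem hne
  set M := rghw C1 C2 j with hM
  have hD₀4' : (suppSet D₀).ncard = M := hD₀4
  have hMn : M ≤ n := by
    rw [← hD₀4']
    calc (suppSet D₀).ncard ≤ (Set.univ : Set (Fin n)).ncard :=
          Set.ncard_le_ncard (Set.subset_univ _) Set.finite_univ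
      _ = n := by rw [Set.ncard_univ, Nat.card_eq_fintype_card, Fintype.card_fin]
  constructor
  · intro A hA D hD1 hD2 hsupp
    by_contra hcon
    have hjD : j ≤ Module.finrank F ↥D := by omega
    obtain ⟨D', hD'1, hD'2, hD'3⟩ := aux2 D ⊥ bot_le (by simpa using hjD)
    have hsupp' : suppSet D' ⊆ (↑(Aᶜ) : Set (Fin n)) :=
      (supp_mono hD'1).trans hsupp
    have hMle : M ≤ (suppSet D').ncard := by
      apply Nat.sInf_le
      refine ⟨D', hD'1.trans hD1, ?_, hD'3, rfl⟩
      rw [eq_bot_iff, ← hD2]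
      exact inf_le_inf_right _ hD'1
    have hcard : (suppSet D').ncard ≤ n - A.card := by
      calc (suppSet D').ncard ≤ (↑(Aᶜ) : Set (Fin n)).ncard :=
            Set.ncard_le_ncard hsupp' (Set.toFinite _)
        _ = (Aᶜ).card := Set.ncard_coe_finset _
        _ = n - A.card := by rw [Finset.card_compl, Fintype.card_fin]
    have hAn : A.card ≤ n := by
      simpa using Finset.card_le_card (Finset.subset_univ A)
    omega
  · refine ⟨((Set.toFinite (suppSet D₀)).toFinset)ᶜ, ?_, D₀, hD₀1, hD₀2, ?_, hD₀3⟩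
    · rw [Finset.card_compl, Fintype.card_fin, Set.Finite.card_toFinset,
        ← Nat.card_eq_fintype_card, Nat.card_coe_set_eq, hD₀4']
    · rw [compl_compl]
      intro i hi
      simpa using hi
end

section
/- Let C_2 ⊆ C_1 ⊆ F_q^n be nested linear codes with ℓ = dim C_1 − dim C_2 ≥ 1, and let 1 ≤ m ≤ ℓ. If A ⊆ {1,...,n} satisfies #A < M_m(C_2^⊥, C_1^⊥), then dim (C_2^⊥)_A − dim (C_1^⊥)_A ≤ m − 1; moreover there exists a set A of size exactly M_m(C_2^⊥, C_1^⊥) with dim (C_2^⊥)_A − dim (C_1^⊥)_A ≥ m. In the associated ramp scheme this establishes the privacy number t_m = M_m(C_2^⊥, C_1^⊥) − 1. -/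
open Classical

/-! An `m`-dimensional `D ≤ C₂^⊥` with `D ⊓ C₁^⊥ = ⊥` lies in `(C₂^⊥)_A` exactly when its support
lies in `A`. If the dimension gap on `A` were at least `m`, a complement of `(C₁^⊥)_A` in
`(C₂^⊥)_A` would contain such a `D`, forcing `M_m ≤ #A`. Conversely, for a minimiser `D` and
`A = supp D`, the space `(C₁^⊥)_A ⊕ D` sits inside `(C₂^⊥)_A`. -/

open Module Submodule

section Subspaces

variable {F V : Type*} [Field F] [AddCommGroup V] [Module F V]

lemma Submodule.exists_le_finrank_eq (W : Submodule F V) {m : ℕ} (hm : m ≤ finrank F W) :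
    ∃ D ≤ W, finrank F D = m := by
  obtain ⟨f, hf⟩ := exists_linearIndependent_of_le_finrank hm
  refine ⟨span F (Set.range (W.subtype ∘ f)), span_le.2 ?_, ?_⟩
  · rintro _ ⟨i, rfl⟩
    exact (f i).2
  · rw [finrank_span_eq_card (hf.map' _ W.ker_subtype), Fintype.card_fin]

variable [FiniteDimensional F V]

lemma Submodule.exists_le_inf_eq_bot_finrank_eq {S T : Submodule F V} (hST : S ≤ T) {m : ℕ}
    (hm : m + finrank F S ≤ finrank F T) :
    ∃ D ≤ T, D ⊓ S = ⊥ ∧ finrank F D = m := by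
  let p : Submodule F T := S.comap T.subtype
  have hp : p.map T.subtype = S := by
    rw [map_comap_subtype, inf_eq_right.2 hST]
  obtain ⟨q, hpq⟩ := p.exists_isCompl
  have hq : finrank F p + finrank F q = finrank F T := finrank_add_eq_of_isCompl hpq
  rw [← hp, finrank_map_subtype_eq] at hm
  obtain ⟨D, hDq, hDm⟩ := q.exists_le_finrank_eq (m := m) (by omega)
  refine ⟨D.map T.subtype, map_subtype_le _ _, ?_, by rw [finrank_map_subtype_eq, hDm]⟩
  rw [← hp, ← map_inf _ T.injective_subtype, eq_bot_mono (inf_le_inf_right p hDq)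
    hpq.symm.inf_eq_bot, map_bot]

lemma Submodule.finrank_add_finrank_le_of_inf_eq_bot {S D T : Submodule F V} (hST : S ≤ T)
    (hDT : D ≤ T) (hDS : D ⊓ S = ⊥) : finrank F S + finrank F D ≤ finrank F T :=
  calc finrank F S + finrank F D = finrank F ↥(S ⊔ D) := by
        rw [← finrank_sup_add_finrank_inf_eq, inf_comm, hDS, finrank_bot, add_zero]
    _ ≤ finrank F T := finrank_mono (sup_le hST hDT)

end Subspaces

section Codes

variable {F : Type*} [Field F] {n : ℕ}

lemma dualCode_eq_comap_dualAnnihilator (C : Submodule F (Fin n → F)) :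
    dualCode C = C.dualAnnihilator.comap (dotProductEquiv F (Fin n)).toLinearMap := by
  ext x
  simp [dualCode, mem_dualAnnihilator, dotProduct]

lemma finrank_dualCode (C : Submodule F (Fin n → F)) :
    finrank F (dualCode C) = n - finrank F C := by
  have hC := Subspace.finrank_add_finrank_dualAnnihilator_eq C
  rw [finrank_fin_fun] at hC
  rw [dualCode_eq_comap_dualAnnihilator, comap_equiv_eq_map_symm, LinearEquiv.finrank_map_eq]
  omega

lemma dualCode_anti {C C' : Submodule F (Fin n → F)} (h : C ≤ C') :
    dualCode C' ≤ dualCode C := fun _ hx c hc => hx c (h hc)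

lemma le_zeroOutside_iff_suppSet_subset (D : Submodule F (Fin n → F)) (A : Finset (Fin n)) :
    D ≤ zeroOutside F A ↔ suppSet D ⊆ A := by
  constructor
  · rintro hD i ⟨x, hx, hxi⟩
    by_contra hi
    exact hxi (hD hx i hi)
  · intro hA x hx i hi
    by_contra hxi
    exact hi (hA ⟨x, hx, hxi⟩)

variable {S T D : Submodule F (Fin n → F)} {m : ℕ}

lemma rghw_le_card (hDT : D ≤ T) (hDS : D ⊓ S = ⊥) (hDm : finrank F D = m)
    {A : Finset (Fin n)} (hDA : D ≤ zeroOutside F A) : rghw T S m ≤ A.card :=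
  calc rghw T S m ≤ (suppSet D).ncard := Nat.sInf_le ⟨D, hDT, hDS, hDm, rfl⟩
    _ ≤ (A : Set (Fin n)).ncard :=
        Set.ncard_le_ncard ((le_zeroOutside_iff_suppSet_subset D A).1 hDA)
    _ = A.card := Set.ncard_coe_finset A

lemma exists_ncard_suppSet_eq_rghw (hST : S ≤ T) (hm : m + finrank F S ≤ finrank F T) :
    ∃ D ≤ T, D ⊓ S = ⊥ ∧ finrank F D = m ∧ (suppSet D).ncard = rghw T S m := by
  obtain ⟨D, hDT, hDS, hDm⟩ := exists_le_inf_eq_bot_finrank_eq hST hm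
  have hne : {w | ∃ D : Submodule F (Fin n → F), D ≤ T ∧ D ⊓ S = ⊥ ∧
      finrank F D = m ∧ (suppSet D).ncard = w}.Nonempty := ⟨_, D, hDT, hDS, hDm, rfl⟩
  exact Nat.sInf_mem hne

lemma finrank_inf_zeroOutside_sub_le_of_card_lt_rghw (hST : S ≤ T) {A : Finset (Fin n)}
    (hA : A.card < rghw T S m) :
    finrank F ↥(T ⊓ zeroOutside F A) - finrank F ↥(S ⊓ zeroOutside F A) ≤ m - 1 := by
  by_contra! hlt
  obtain ⟨D, hDTA, hDSA, hDm⟩ :=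
    exists_le_inf_eq_bot_finrank_eq (inf_le_inf_right (zeroOutside F A) hST) (m := m) (by omega)
  have hDA : D ≤ zeroOutside F A := hDTA.trans inf_le_right
  have hDS : D ⊓ S = ⊥ := by
    rw [← hDSA, inf_comm S, ← inf_assoc, inf_eq_left.2 hDA]
  exact hA.not_ge (rghw_le_card (hDTA.trans inf_le_left) hDS hDm hDA)

lemma exists_card_eq_rghw_le_finrank_inf_zeroOutside_sub (hST : S ≤ T)
    (hm : m + finrank F S ≤ finrank F T) :
    ∃ A : Finset (Fin n), A.card = rghw T S m ∧
      m ≤ finrank F ↥(T ⊓ zeroOutside F A) - finrank F ↥(S ⊓ zeroOutside F A) := by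
  obtain ⟨D, hDT, hDS, hDm, hD⟩ := exists_ncard_suppSet_eq_rghw hST hm
  have hDA : D ≤ zeroOutside F (suppSet D).toFinset :=
    (le_zeroOutside_iff_suppSet_subset D _).2 (by simp)
  refine ⟨(suppSet D).toFinset, by rw [← Set.ncard_eq_toFinset_card', hD], ?_⟩
  have hdim := finrank_add_finrank_le_of_inf_eq_bot (inf_le_inf_right _ hST) (le_inf hDT hDA)
    (eq_bot_mono (inf_le_inf_left D inf_le_left) hDS)
  omega

end Codes

theorem privacy_numbers_general {F : Type*} [Field F] {n : ℕ}
    (C1 C2 : Submodule F (Fin n → F)) (h : C2 ≤ C1)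
    (ℓ : ℕ) (hℓ : ℓ = Module.finrank F ↥C1 - Module.finrank F ↥C2)
    (m : ℕ) (hm2 : m ≤ ℓ) :
    (∀ A : Finset (Fin n), A.card < rghw (dualCode C2) (dualCode C1) m →
      Module.finrank F ↥(dualCode C2 ⊓ zeroOutside F A)
        - Module.finrank F ↥(dualCode C1 ⊓ zeroOutside F A) ≤ m - 1) ∧
    (∃ A : Finset (Fin n), A.card = rghw (dualCode C2) (dualCode C1) m ∧
      m ≤ Module.finrank F ↥(dualCode C2 ⊓ zeroOutside F A)
        - Module.finrank F ↥(dualCode C1 ⊓ zeroOutside F A)) := by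
  have hdual : dualCode C1 ≤ dualCode C2 := dualCode_anti h
  have hm : m + finrank F (dualCode C1) ≤ finrank F (dualCode C2) := by
    have hC1 : finrank F C1 ≤ n := by simpa using C1.finrank_le
    have hC21 : finrank F C2 ≤ finrank F C1 := finrank_mono h
    rw [finrank_dualCode, finrank_dualCode]
    omega
  exact ⟨fun A hA => finrank_inf_zeroOutside_sub_le_of_card_lt_rghw hdual hA,
    exists_card_eq_rghw_le_finrank_inf_zeroOutside_sub hdual hm⟩

theorem privacy_numbers {F : Type*} [Field F] {n : ℕ}
    (C1 C2 : Submodule F (Fin n → F)) (h : C2 ≤ C1)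
    (ℓ : ℕ) (hℓ : ℓ = Module.finrank F ↥C1 - Module.finrank F ↥C2) (hℓ1 : 1 ≤ ℓ)
    (m : ℕ) (hm1 : 1 ≤ m) (hm2 : m ≤ ℓ) :
    (∀ A : Finset (Fin n), A.card < rghw (dualCode C2) (dualCode C1) m →
      Module.finrank F ↥(dualCode C2 ⊓ zeroOutside F A)
        - Module.finrank F ↥(dualCode C1 ⊓ zeroOutside F A) ≤ m - 1) ∧
    (∃ A : Finset (Fin n), A.card = rghw (dualCode C2) (dualCode C1) m ∧
      m ≤ Module.finrank F ↥(dualCode C2 ⊓ zeroOutside F A)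
        - Module.finrank F ↥(dualCode C1 ⊓ zeroOutside F A)) :=
  privacy_numbers_general C1 C2 h ℓ hℓ m hm2
end

section
/- Let C_2 ⊆ C_1 ⊆ F_q^n be nested linear codes with ℓ = dim C_1 − dim C_2. Fix bases b_1,...,b_{k_2} of C_2 extended to b_1,...,b_{k_1} of C_1 (k_1 = k_2 + ℓ). For a set A = {i_1 < ... < i_m} ⊆ {1,...,n} and realizable shares c'_{i_1},...,c'_{i_m} (i.e., some codeword c = Σ a_j b_j + Σ s_t b_{k_2+t} agrees with them on A), the set of secrets (s_1,...,s_ℓ) ∈ F_q^ℓ consistent with these shares is a coset of a linear subspace of F_q^ℓ of dimension dim (C_1)_Ā − dim (C_2)_Ā; in particular its cardinality is q^{dim (C_1)_Ā − dim (C_2)_Ā}. -/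
open Classical

/-!
Parametrise `C₁` by the injective linear map `T (a, s) = ∑ aⱼ bⱼ + ∑ sₜ b_{k₂+t}`, whose
restriction to `s = 0` parametrises `C₂`. The secrets consistent with the shares are the
`s`-components of a fibre of `π ∘ T`, where `π` forgets the coordinates outside `A`; hence they
form a translate of `V = snd (ker (π ∘ T))`. Rank–nullity for `snd` on `ker (π ∘ T)` gives
`dim V = dim ker (π ∘ T) - dim (ker (π ∘ T) ∩ {s = 0})`, and `T` maps these two spaces
isomorphically onto `(C₁)_Ā = C₁ ∩ ker π` and `(C₂)_Ā = C₂ ∩ ker π`.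
-/
section LinearAlgebra

open Module Submodule LinearMap Function

theorem Submodule.finrank_map_add_finrank_inf_ker {K M N : Type*} [DivisionRing K]
    [AddCommGroup M] [Module K M] [AddCommGroup N] [Module K N]
    (f : M →ₗ[K] N) (W : Submodule K M) [FiniteDimensional K W] :
    finrank K (W.map f) + finrank K ↥(W ⊓ ker f) = finrank K W := by
  have := (f.domRestrict W).finrank_range_add_finrank_ker
  rwa [range_domRestrict, ker_domRestrict, ← finrank_map_subtype_eq, map_comap_subtype] at this

theorem setOf_exists_apply_eq_eq_image_add {R M₁ M₂ N : Type*} [Ring R]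
    [AddCommGroup M₁] [Module R M₁] [AddCommGroup M₂] [Module R M₂]
    [AddCommGroup N] [Module R N] (g : M₁ × M₂ →ₗ[R] N) (a₀ : M₁) (s₀ : M₂) :
    {s | ∃ a, g (a, s) = g (a₀, s₀)} =
      (fun v => s₀ + v) '' (ker g).map (snd R M₁ M₂) := by
  ext s
  constructor
  · rintro ⟨a, ha⟩
    refine ⟨s - s₀, ⟨(a - a₀, s - s₀), ?_, rfl⟩, add_sub_cancel s₀ s⟩
    rw [SetLike.mem_coe, mem_ker, ← Prod.mk_sub_mk, map_sub, ha, sub_self]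
  · rintro ⟨_, ⟨⟨a, v⟩, hv, rfl⟩, rfl⟩
    exact ⟨a₀ + a, by rw [snd_apply, ← Prod.mk_add_mk, map_add, mem_ker.1 hv, add_zero]⟩

theorem finrank_map_snd_ker_comp_add_finrank_inf_ker {K M₁ M₂ N P : Type*} [DivisionRing K]
    [AddCommGroup M₁] [Module K M₁] [AddCommGroup M₂] [Module K M₂]
    [AddCommGroup N] [Module K N] [AddCommGroup P] [Module K P]
    [FiniteDimensional K M₁] [FiniteDimensional K M₂]
    (T : M₁ × M₂ →ₗ[K] N) (hT : Injective T) (π : N →ₗ[K] P) :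
    finrank K ((ker (π ∘ₗ T)).map (snd K M₁ M₂))
      + finrank K ↥(range (T ∘ₗ inl K M₁ M₂) ⊓ ker π) = finrank K ↥(range T ⊓ ker π) := by
  have hW : (ker (π ∘ₗ T)).map T = range T ⊓ ker π := by
    rw [ker_comp, map_comap_eq]
  have hWinl :
      (ker (π ∘ₗ T) ⊓ ker (snd K M₁ M₂)).map T = range (T ∘ₗ inl K M₁ M₂) ⊓ ker π := by
    rw [map_inf T hT, hW, ker_snd, range_comp, inf_comm, ← inf_assoc,
      inf_of_le_left map_le_range]
  rw [← hW, ← hWinl, (equivMapOfInjective T hT _).finrank_eq.symm,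
    (equivMapOfInjective T hT _).finrank_eq.symm]
  exact finrank_map_add_finrank_inf_ker _ _

theorem Submodule.natCard_image_add_left {K M : Type*} [DivisionRing K] [AddCommGroup M]
    [Module K M] [Module.Finite K M] (V : Submodule K M) (p : M) :
    Nat.card ((fun v => p + v) '' (V : Set M)) = Nat.card K ^ finrank K V := by
  rw [Nat.card_image_of_injective (add_right_injective p), Nat.card_coe_set_eq,
    ← natCard_eq_pow_finrank]
  rfl

variable {R M ι κ : Type*} [Ring R] [AddCommGroup M] [Module R M] [Fintype ι] [Fintype κ]
  {v : ι → M} {w : κ → M}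

theorem Fintype.range_coprod_linearCombination :
    range ((Fintype.linearCombination R v).coprod (Fintype.linearCombination R w))
      = span R (Set.range (Sum.elim v w)) := by
  rw [range_coprod, Fintype.range_linearCombination, Fintype.range_linearCombination,
    Set.Sum.elim_range, span_union]

theorem LinearIndependent.injective_coprod_linearCombination
    (h : LinearIndependent R (Sum.elim v w)) :
    Injective ((Fintype.linearCombination R v).coprod (Fintype.linearCombination R w)) := by
  obtain ⟨hv, hw, hvw⟩ := linearIndependent_sum.1 h
  simp only [Sum.elim_comp_inl, Sum.elim_comp_inr] at hv hw hvw
  rw [linearIndependent_iff_injective_fintypeLinearCombination, ← ker_eq_bot] at hv hw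
  rw [← ker_eq_bot, ker_coprod_of_disjoint_range, hv, hw, prod_bot]
  simpa only [Fintype.range_linearCombination] using hvw

end LinearAlgebra

section Shares

variable {F : Type*} [Field F] {n : ℕ} {A : Finset (Fin n)}

theorem projMap_eq_projMap_iff {x y : Fin n → F} :
    projMap F A x = projMap F A y ↔ ∀ i ∈ A, x i = y i := by
  simp only [funext_iff, projMap, LinearMap.coe_mk, AddHom.coe_mk]
  refine forall_congr' fun i => ?_
  by_cases hi : i ∈ A <;> simp [hi]

theorem ker_projMap : LinearMap.ker (projMap F A) = zeroOutside F Aᶜ := by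
  ext x
  rw [LinearMap.mem_ker, ← map_zero (projMap F A), projMap_eq_projMap_iff]
  show _ ↔ ∀ i, i ∉ Aᶜ → x i = 0
  simp only [Finset.mem_compl, not_not, Pi.zero_apply]

end Shares

theorem consistent_secrets_coset {F : Type*} [Field F] [Fintype F] {n k2 ℓ : ℕ}
    (b : Fin (k2 + ℓ) → (Fin n → F)) (hb : LinearIndependent F b)
    (C1 C2 : Submodule F (Fin n → F))
    (hC1 : C1 = Submodule.span F (Set.range b))
    (hC2 : C2 = Submodule.span F (Set.range (fun j : Fin k2 => b (Fin.castAdd ℓ j))))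
    (A : Finset (Fin n)) (c' : Fin n → F)
    (hreal : ∃ (a : Fin k2 → F) (s : Fin ℓ → F), ∀ i ∈ A,
      (∑ j : Fin k2, a j • b (Fin.castAdd ℓ j)
        + ∑ t : Fin ℓ, s t • b (Fin.natAdd k2 t)) i = c' i) :
    ∃ (V : Submodule F (Fin ℓ → F)) (p : Fin ℓ → F),
      {s : Fin ℓ → F | ∃ a : Fin k2 → F, ∀ i ∈ A,
          (∑ j : Fin k2, a j • b (Fin.castAdd ℓ j)
            + ∑ t : Fin ℓ, s t • b (Fin.natAdd k2 t)) i = c' i}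
        = (fun v => p + v) '' (V : Set (Fin ℓ → F)) ∧
      Module.finrank F ↥V =
        Module.finrank F ↥(C1 ⊓ zeroOutside F Aᶜ)
          - Module.finrank F ↥(C2 ⊓ zeroOutside F Aᶜ) ∧
      Nat.card {s : Fin ℓ → F | ∃ a : Fin k2 → F, ∀ i ∈ A,
          (∑ j : Fin k2, a j • b (Fin.castAdd ℓ j)
            + ∑ t : Fin ℓ, s t • b (Fin.natAdd k2 t)) i = c' i}
        = Fintype.card F ^
            (Module.finrank F ↥(C1 ⊓ zeroOutside F Aᶜ)
              - Module.finrank F ↥(C2 ⊓ zeroOutside F Aᶜ)) := by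
  set T := (Fintype.linearCombination F fun j : Fin k2 => b (Fin.castAdd ℓ j)).coprod
    (Fintype.linearCombination F fun t : Fin ℓ => b (Fin.natAdd k2 t))
  have hsplit : Sum.elim (fun j : Fin k2 => b (Fin.castAdd ℓ j)) (fun t => b (Fin.natAdd k2 t))
      = b ∘ finSumFinEquiv := by
    ext (i | i) <;> simp
  have hT : Function.Injective T :=
    LinearIndependent.injective_coprod_linearCombination
      (hsplit ▸ hb.comp _ finSumFinEquiv.injective)
  have hrangeT : LinearMap.range T = C1 := by
    rw [Fintype.range_coprod_linearCombination, hsplit, EquivLike.range_comp, hC1]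
  have hrangeT_inl : LinearMap.range (T ∘ₗ LinearMap.inl F _ _) = C2 := by
    rw [LinearMap.coprod_inl, Fintype.range_linearCombination, hC2]
  have hT_apply (a : Fin k2 → F) (s : Fin ℓ → F) :
      ∑ j, a j • b (Fin.castAdd ℓ j) + ∑ t, s t • b (Fin.natAdd k2 t) = T (a, s) := by
    simp [T, Fintype.linearCombination_apply]
  obtain ⟨a₀, s₀, h₀⟩ := hreal
  have hset : {s : Fin ℓ → F | ∃ a : Fin k2 → F, ∀ i ∈ A,
      (∑ j : Fin k2, a j • b (Fin.castAdd ℓ j)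
        + ∑ t : Fin ℓ, s t • b (Fin.natAdd k2 t)) i = c' i}
      = {s | ∃ a, (projMap F A ∘ₗ T) (a, s) = (projMap F A ∘ₗ T) (a₀, s₀)} := by
    rw [hT_apply] at h₀
    simp only [hT_apply, LinearMap.comp_apply, projMap_eq_projMap_iff.2 h₀,
      projMap_eq_projMap_iff]
  rw [setOf_exists_apply_eq_eq_image_add] at hset
  have hdim := finrank_map_snd_ker_comp_add_finrank_inf_ker T hT (projMap F A)
  rw [hrangeT, hrangeT_inl, ker_projMap] at hdim
  refine ⟨_, s₀, hset, by omega, ?_⟩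
  rw [hset, Submodule.natCard_image_add_left, Nat.card_eq_fintype_card, ← hdim,
    Nat.add_sub_cancel]
end
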